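/- Let n ≡ 1 (mod 4) be prime and consider the linearization of the Kuramoto model on the Paley graph P_n about the synchronous (0-twisted) state u_n^{(0)}. Then λ_0(0) = 0, and for every x ∈ Z_n \ {0}, λ_x(0) = (−1)^{α+1} · (2π/(n−1)) · (n − G_n(x)); in particular, for attractive coupling (α = 0) every λ_x(0), x ≠ 0, is strictly negative, while for repulsive coupling (α = 1) every λ_x(0), x ≠ 0, is strictly positive (Lemma 6.1, case q = 0). -/

import Mathlib

/-!
The characters `y ↦ ψ (x * y)` of `ZMod n` diagonalize every convolution operator. Since `-1` is a
square modulo `n ≡ 1 [MOD 4]`, the set `Q` of nonzero squares is symmetric, so the eigenvalue at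
`e x` is `c * (S x - #Q)` with the real character sum `S x = ∑ y ∈ Q, ψ (x * y)`. Every nonzero
square has exactly two square roots, hence `G x = 1 + 2 * S x`, which turns the eigenvalue into the
stated formula; and `S x < #Q` for `x ≠ 0`, because all terms have modulus one and `ψ x ≠ 1`.
-/

open Finset Complex ComplexOrder

theorem Finset.sum_comp_neg_of_neg_mem {G M : Type*} [AddGroup G] [AddCommMonoid M]
    {s : Finset G} (hs : ∀ a ∈ s, -a ∈ s) (f : G → M) : ∑ a ∈ s, f (-a) = ∑ a ∈ s, f a :=
  sum_equiv (Equiv.neg G) (fun a => ⟨hs a, fun h => neg_neg a ▸ hs _ h⟩) fun _ _ => rfl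

namespace AddChar

variable {G : Type*} [AddCommGroup G] [Fintype G] (ψ : AddChar G ℂ)

lemma sum_mul_apply_sub (δ : G → ℂ) (z : G) :
    ∑ y, δ y * ψ (z - y) = (∑ y, δ y * ψ (-y)) * ψ z := by
  rw [sum_mul]
  refine sum_congr rfl fun y _ => ?_
  rw [sub_eq_add_neg, map_add_eq_mul]
  ring

lemma ofReal_re_sum_of_neg_mem {s : Finset G} (hs : ∀ a ∈ s, -a ∈ s) :
    (((∑ a ∈ s, ψ a).re : ℝ) : ℂ) = ∑ a ∈ s, ψ a := by
  refine conj_eq_iff_re.mp ?_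
  simp only [map_sum, ← map_neg_eq_conj]
  exact sum_comp_neg_of_neg_mem hs ψ

lemma re_sum_lt_card {s : Finset G} {a : G} (ha : a ∈ s) (hψa : ψ a ≠ 1) :
    (∑ b ∈ s, ψ b).re < #s := by
  have hle : ∀ b ∈ s, (ψ b).re ≤ 1 := fun b _ => (re_le_norm _).trans_eq (ψ.norm_apply b)
  have hlt : (ψ a).re < 1 := by
    refine (hle a ha).lt_of_ne fun h => hψa ?_
    have hnonneg : (0 : ℂ) ≤ ψ a := re_eq_norm.mp (h.trans (ψ.norm_apply a).symm)
    exact Complex.ext h (nonneg_iff.mp hnonneg).2.symm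
  simpa [re_sum] using sum_lt_sum hle ⟨a, ha, hlt⟩

lemma convolution_sub_degree_apply [DecidableEq G] {s : Finset G} (hs : ∀ a ∈ s, -a ∈ s) (c : ℂ)
    (z : G) :
    (∑ y, (if y ∈ s then c else 0) * ψ (z - y)) - (∑ y ∈ s, if y ∈ s then c else 0) * ψ z
      = c * (∑ a ∈ s, ψ a - #s) * ψ z := by
  rw [sum_mul_apply_sub, sum_ite_of_true fun _ h => h]
  simp only [ite_mul, zero_mul, sum_ite_mem, univ_inter, ← mul_sum, sum_comp_neg_of_neg_mem hs ψ,
    sum_const, nsmul_eq_mul]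
  ring

end AddChar

namespace FiniteField

variable {F : Type*} [Field F] [Fintype F] [DecidableEq F]

lemma card_filter_sq_eq_two (hF : ringChar F ≠ 2) {a : F} (ha : a ≠ 0) (hsq : IsSquare a) :
    #{x | x ^ 2 = a} = 2 := by
  have h := quadraticChar_card_sqrts hF a
  rw [(quadraticChar_one_iff_isSquare ha).mpr hsq, Set.toFinset_ofPred] at h
  exact_mod_cast h

lemma sum_comp_sq {M : Type*} [AddCommMonoid M] (hF : ringChar F ≠ 2) {Q : Finset F}
    (hQ : ∀ a, a ∈ Q ↔ a ≠ 0 ∧ ∃ x, x ^ 2 = a) (f : F → M) :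
    ∑ x, f (x ^ 2) = f 0 + 2 • ∑ a ∈ Q, f a := by
  have himage : univ.image (· ^ 2) = insert 0 Q := by
    ext a
    simp only [mem_image, mem_univ, true_and, mem_insert, hQ]
    constructor
    · rintro ⟨x, rfl⟩
      exact (em (x ^ 2 = 0)).imp id fun h => ⟨h, x, rfl⟩
    · rintro (rfl | ⟨-, x, rfl⟩)
      exacts [⟨0, zero_pow two_ne_zero⟩, ⟨x, rfl⟩]
  have hfiber : ∀ a ∈ Q, #{x | x ^ 2 = a} = 2 := fun a ha =>
    have ⟨ha0, x, hx⟩ := (hQ a).mp ha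
    card_filter_sq_eq_two hF ha0 ⟨x, by rw [← hx, sq]⟩
  have h0 : 0 ∉ Q := fun h => ((hQ 0).mp h).1 rfl
  rw [sum_comp, himage, sum_insert h0, sum_congr rfl fun a ha => by rw [hfiber a ha], smul_sum]
  simp [filter_eq']

end FiniteField

namespace ZMod

lemma neg_mem_of_mem_of_mod_four_ne_three {p : ℕ} [Fact p.Prime] (hp : p % 4 ≠ 3)
    {Q : Finset (ZMod p)} (hQ : ∀ a, a ∈ Q ↔ a ≠ 0 ∧ ∃ x, x ^ 2 = a) {a : ZMod p} (ha : a ∈ Q) :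
    -a ∈ Q := by
  obtain ⟨i, hi⟩ := exists_sq_eq_neg_one_iff.mpr hp
  obtain ⟨ha0, x, rfl⟩ := (hQ _).mp ha
  exact (hQ _).mpr ⟨neg_ne_zero.mpr ha0, i * x, by rw [mul_pow, sq i, ← hi]; ring⟩

variable {N : ℕ} [NeZero N]

lemma stdAddChar_natCast (m : ℕ) :
    stdAddChar (m : ZMod N) = exp (2 * Real.pi * I * m / N) := by
  simpa using stdAddChar_coe (N := N) m

lemma sum_range_natCast {M : Type*} [AddCommMonoid M] (f : ZMod N → M) :
    ∑ k ∈ range N, f k = ∑ k, f k :=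
  sum_nbij' (↑) val (by simp) (by simp [val_lt]) (fun k hk => val_natCast_of_lt (mem_range.1 hk))
    (by simp) (by simp)

lemma sum_range_exp_val_mul_sq {p : ℕ} [Fact p.Prime] (hp : p ≠ 2) {Q : Finset (ZMod p)}
    (hQ : ∀ a, a ∈ Q ↔ a ≠ 0 ∧ ∃ x, x ^ 2 = a) (x : ZMod p) :
    ∑ k ∈ range p, exp (2 * Real.pi * I * ((x.val * k ^ 2 : ℕ) : ℂ) / p)
      = 1 + 2 * ∑ a ∈ Q, stdAddChar (x * a) := calc
  _ = ∑ k ∈ range p, stdAddChar (x * (k : ZMod p) ^ 2) :=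
    sum_congr rfl fun k _ => by rw [← stdAddChar_natCast]; simp
  _ = ∑ k, stdAddChar (x * k ^ 2) := sum_range_natCast fun k => stdAddChar (x * k ^ 2)
  _ = 1 + 2 * ∑ a ∈ Q, stdAddChar (x * a) := by
    rw [FiniteField.sum_comp_sq (by rwa [ringChar_zmod_n]) hQ fun a => stdAddChar (x * a)]
    simp [nsmul_eq_mul]

end ZMod

theorem paley_linearization_about_synchronous_state_general
    (n : ℕ) (hp : n.Prime) (h4 : n % 4 = 1) [NeZero n]
    (α : ℕ)
    (Q : Finset (ZMod n))
    (hQ : ∀ a : ZMod n, a ∈ Q ↔ (a ≠ 0 ∧ ∃ x : ZMod n, x ^ 2 = a))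
    (hcard : (Q.card : ℝ) = ((n : ℝ) - 1) / 2)
    (deltaS : ZMod n → ℂ)
    (hdelta : ∀ x : ZMod n, deltaS x =
      if x ∈ Q then ((((-1 : ℝ) ^ α * 2 * Real.pi / Q.card) : ℝ) : ℂ) else 0)
    (B : (ZMod n → ℂ) → (ZMod n → ℂ))
    (hB : ∀ (η : ZMod n → ℂ) (x : ZMod n),
      B η x = (∑ y : ZMod n, deltaS y * η (x - y)) - (∑ y ∈ Q, deltaS y) * η x)
    (e : ZMod n → ZMod n → ℂ)
    (he : ∀ x y : ZMod n,
      e x y = Complex.exp (2 * Real.pi * Complex.I * ((x.val * y.val : ℕ) : ℂ) / n))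
    (G : ZMod n → ℂ)
    (hG : ∀ x : ZMod n, G x = ∑ k ∈ Finset.range n,
      Complex.exp (2 * Real.pi * Complex.I * ((x.val * k ^ 2 : ℕ) : ℂ) / n)) :
    ∃ lam : ZMod n → ℝ,
      (∀ x : ZMod n, B (e x) = ((lam x : ℝ) : ℂ) • e x) ∧
      lam 0 = 0 ∧
      (∀ x : ZMod n, x ≠ 0 →
        ((lam x : ℝ) : ℂ)
            = (((-1 : ℝ) ^ (α + 1) * (2 * Real.pi / ((n : ℝ) - 1)) : ℝ) : ℂ) * ((n : ℂ) - G x) ∧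
        (α = 0 → lam x < 0) ∧
        (α = 1 → 0 < lam x)) := by
  have : Fact n.Prime := ⟨hp⟩
  set ψ : AddChar (ZMod n) ℂ := ZMod.stdAddChar
  set c : ℝ := (-1) ^ α * 2 * Real.pi / #Q
  set S : ZMod n → ℂ := fun x => ∑ a ∈ Q, ψ.mulShift x a
  have hQneg : ∀ a ∈ Q, -a ∈ Q := fun a => ZMod.neg_mem_of_mem_of_mod_four_ne_three (by omega) hQ
  have hSreal : ∀ x, ((S x).re : ℂ) = S x := fun x => (ψ.mulShift x).ofReal_re_sum_of_neg_mem hQneg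
  have he' : ∀ x, e x = ψ.mulShift x := fun x => funext fun y => by
    rw [he, ← ZMod.stdAddChar_natCast]; simp [ψ]
  have hG' : ∀ x, G x = 1 + 2 * S x := fun x => by
    rw [hG, ZMod.sum_range_exp_val_mul_sq (by omega) hQ]; rfl
  obtain rfl : deltaS = fun y => if y ∈ Q then (c : ℂ) else 0 := funext hdelta
  have h1Q : (1 : ZMod n) ∈ Q := (hQ 1).mpr ⟨one_ne_zero, 1, one_pow 2⟩
  refine ⟨fun x => c * ((S x).re - #Q), fun x => funext fun z => ?_, ?_, fun x hx => ?_⟩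
  · rw [hB, he', ψ.mulShift x |>.convolution_sub_degree_apply hQneg, Pi.smul_apply, smul_eq_mul]
    push_cast
    rw [hSreal]
  · simp [S]
  have hSlt : (S x).re < #Q :=
    (ψ.mulShift x).re_sum_lt_card h1Q (by simpa using ZMod.injective_stdAddChar.ne hx)
  have hQpos : (0 : ℝ) < #Q := by exact_mod_cast card_pos.mpr ⟨1, h1Q⟩
  refine ⟨?_, ?_, ?_⟩
  · have hn1 : (n : ℂ) - 1 ≠ 0 := sub_ne_zero.mpr (by exact_mod_cast hp.one_lt.ne')
    have hcardC : (#Q : ℂ) = ((n : ℂ) - 1) / 2 := by exact_mod_cast hcard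
    simp only [c]
    push_cast
    rw [hSreal, hG', hcardC]
    field_simp
    ring
  · rintro rfl
    exact mul_neg_of_pos_of_neg (div_pos (by simp [Real.pi_pos]) hQpos) (sub_neg.mpr hSlt)
  · rintro rfl
    have hc : c < 0 := div_neg_of_neg_of_pos (by simp [Real.pi_pos]) hQpos
    exact mul_pos_of_neg_of_neg hc (sub_neg.mpr hSlt)

/-- Lemma 6.1, case q = 0: for the linearization of the Kuramoto model on
the Paley graph `P_n` about the synchronous state, `λ_0(0) = 0` and for `x ≠ 0`,
`λ_x(0) = (-1)^{α+1}·(2π/(n-1))·(n - G_n(x))`; for attractive coupling each such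
eigenvalue is strictly negative, for repulsive coupling strictly positive. -/
theorem paley_linearization_about_synchronous_state
    (n : ℕ) (hp : n.Prime) (h4 : n % 4 = 1) [NeZero n]
    (α : ℕ) (hα : α = 0 ∨ α = 1)
    (Q : Finset (ZMod n))
    (hQ : ∀ a : ZMod n, a ∈ Q ↔ (a ≠ 0 ∧ ∃ x : ZMod n, x ^ 2 = a))
    (hcard : (Q.card : ℝ) = ((n : ℝ) - 1) / 2)
    (deltaS : ZMod n → ℂ)
    (hdelta : ∀ x : ZMod n, deltaS x =
      if x ∈ Q then ((((-1 : ℝ) ^ α * 2 * Real.pi / Q.card) : ℝ) : ℂ) else 0)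
    (B : (ZMod n → ℂ) → (ZMod n → ℂ))
    (hB : ∀ (η : ZMod n → ℂ) (x : ZMod n),
      B η x = (∑ y : ZMod n, deltaS y * η (x - y)) - (∑ y ∈ Q, deltaS y) * η x)
    (e : ZMod n → ZMod n → ℂ)
    (he : ∀ x y : ZMod n,
      e x y = Complex.exp (2 * Real.pi * Complex.I * ((x.val * y.val : ℕ) : ℂ) / n))
    (G : ZMod n → ℂ)
    (hG : ∀ x : ZMod n, G x = ∑ k ∈ Finset.range n,
      Complex.exp (2 * Real.pi * Complex.I * ((x.val * k ^ 2 : ℕ) : ℂ) / n)) :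
    ∃ lam : ZMod n → ℝ,
      (∀ x : ZMod n, B (e x) = ((lam x : ℝ) : ℂ) • e x) ∧
      lam 0 = 0 ∧
      (∀ x : ZMod n, x ≠ 0 →
        ((lam x : ℝ) : ℂ)
            = (((-1 : ℝ) ^ (α + 1) * (2 * Real.pi / ((n : ℝ) - 1)) : ℝ) : ℂ) * ((n : ℂ) - G x) ∧
        (α = 0 → lam x < 0) ∧
        (α = 1 → 0 < lam x)) :=
  paley_linearization_about_synchronous_state_general n hp h4 α Q hQ hcard deltaS hdelta B hB e he G
    hG
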